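/- arXiv:0906.4401 — 9 statements merged into one kernel-verified Lean document; each statement's English description precedes it below -/
import Mathlib

section
/- In any groupoid (magma) satisfying (M2) (xy)(zt)=(ty)(zx) and x(xy)=y, the identity (xy)x = (zy)z holds. -/
/-! Instantiating (M2) at `z = xy, t = y` and cancelling gives `y = (yy)((xy)x)`, so
`(xy)x = (yy)y` since left multiplication by `yy` is an involution. The right-hand side does
not depend on `x`. -/

theorem apply_apply_self_eq_apply_self_self {M : Type*} (f : M → M → M)
    (hM2 : ∀ x y z t, f (f x y) (f z t) = f (f t y) (f z x))
    (hcancel : ∀ x y, f x (f x y) = y) (x y : M) :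
    f (f x y) x = f (f y y) y := by
  have h : y = f (f y y) (f (f x y) x) := by
    simpa only [hcancel] using hM2 x y (f x y) y
  calc f (f x y) x = f (f y y) (f (f y y) (f (f x y) x)) := (hcancel _ _).symm
    _ = f (f y y) y := by rw [← h]

theorem stmt_1 {M : Type*} (f : M → M → M)
    (hM2 : ∀ x y z t, f (f x y) (f z t) = f (f t y) (f z x))
    (hcancel : ∀ x y, f x (f x y) = y) :
    ∀ x y z, f (f x y) x = f (f z y) z := by
  intro x y z
  rw [apply_apply_self_eq_apply_self_self f hM2 hcancel x y,
    apply_apply_self_eq_apply_self_self f hM2 hcancel z y]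
end

section
/- In any groupoid satisfying (M2) (xy)(zt)=(ty)(zx) and x(xy)=y, the medial law (M1) (xy)(zt)=(xz)(yt) holds. -/
/-!
Combining (M2) with the cancellation law `x(xy) = y` shows that the reversed product `ba` can be
read off `ab` as `(t(ab))t`, for any `t`. Reversing `(xy)(zt)` this way, applying (M2) inside to
`(zt)(xy) = (yt)(xz)`, and reversing back gives `(xz)(yt)`.
-/

namespace M2Groupoid

variable {M : Type*} {f : M → M → M}

theorem mul_mul_eq_of_cancel (hM2 : ∀ x y z t, f (f x y) (f z t) = f (f t y) (f z x))
    (hcancel : ∀ x y, f x (f x y) = y) (x y z t : M) :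
    f (f t (f x y)) (f z x) = f y (f z t) := by
  rw [← hM2, hcancel]

theorem swap_eq (hM2 : ∀ x y z t, f (f x y) (f z t) = f (f t y) (f z x))
    (hcancel : ∀ x y, f x (f x y) = y) (t x z : M) :
    f (f t (f x z)) t = f z x := by
  have h : f (f t (f x z)) (f z x) = t := by
    rw [mul_mul_eq_of_cancel hM2 hcancel, hcancel]
  simpa only [h] using hcancel (f t (f x z)) (f z x)

end M2Groupoid

open M2Groupoid in
theorem stmt_2 {M : Type*} (f : M → M → M)
    (hM2 : ∀ x y z t, f (f x y) (f z t) = f (f t y) (f z x))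
    (hcancel : ∀ x y, f x (f x y) = y) :
    ∀ x y z t, f (f x y) (f z t) = f (f x z) (f y t) := by
  intro x y z t
  calc f (f x y) (f z t)
      = f (f x (f (f z t) (f x y))) x := (swap_eq hM2 hcancel x (f z t) (f x y)).symm
    _ = f (f x (f (f y t) (f x z))) x := by rw [hM2 z t x y]
    _ = f (f x z) (f y t) := swap_eq hM2 hcancel x (f y t) (f x z)
end

section
/- In any groupoid satisfying (M2) (xy)(zt)=(ty)(zx) and x(xy)=y, the identity x²y² = y²x² holds, where x² denotes x*x. -/
/-! Right multiplication by `y²` is an involution, and `y² = x(xy²)` by cancellation. Writing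
`a = xy²`, this gives `x²y² = (x(ay²))(xa)`, which one application of (M2) turns into
`(a(ay²))x² = y²x²`. -/

theorem mul_sq_mul_sq_cancel {M : Type*} (f : M → M → M)
    (hM2 : ∀ x y z t, f (f x y) (f z t) = f (f t y) (f z x))
    (hcancel : ∀ x y, f x (f x y) = y) (x y : M) :
    f (f x (f y y)) (f y y) = x := by
  rw [hM2, hcancel y y, hcancel]

theorem stmt_3 {M : Type*} (f : M → M → M)
    (hM2 : ∀ x y z t, f (f x y) (f z t) = f (f t y) (f z x))
    (hcancel : ∀ x y, f x (f x y) = y) :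
    ∀ x y, f (f x x) (f y y) = f (f y y) (f x x) := by
  intro x y
  set a := f x (f y y)
  calc f (f x x) (f y y)
      = f (f x (f a (f y y))) (f x a) := by
        rw [mul_sq_mul_sq_cancel f hM2 hcancel, hcancel]
    _ = f (f a (f a (f y y))) (f x x) := hM2 _ _ _ _
    _ = f (f y y) (f x x) := by rw [hcancel]
end

section
/- In any groupoid satisfying (M2) (xy)(zt)=(ty)(zx) and x(xy)=y, the identities (M5) x((yz)t)=z((yx)t) and (M6) x(y(zt))=z(y(xt)) hold. -/
/-! The map `y ↦ (x ⋆ y) ⋆ x` does not depend on `x`, and it sends `x ⋆ y` to `y ⋆ x`;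
moreover right multiplication by `(w ⋆ y) ⋆ w` undoes right multiplication by `y`.
Together with the instance `(t ⋆ (u ⋆ v)) ⋆ (z ⋆ u) = v ⋆ (z ⋆ t)` of (M2), obtained by
cancelling `u ⋆ (u ⋆ v)`, this expresses both sides of (M5) and of (M6) as one common term. -/

section Groupoid

variable {M : Type*} (f : M → M → M)

local infixl:70 " ⋆ " => f

theorem op_op_cancel_right (hM2 : ∀ x y z t, (x ⋆ y) ⋆ (z ⋆ t) = (t ⋆ y) ⋆ (z ⋆ x))
    (hcancel : ∀ x y, x ⋆ (x ⋆ y) = y) (x y w : M) :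
    (x ⋆ y) ⋆ ((w ⋆ y) ⋆ w) = x :=
  (hM2 w y (w ⋆ y) x).symm.trans (hcancel _ _)

theorem op_op_self_eq (hM2 : ∀ x y z t, (x ⋆ y) ⋆ (z ⋆ t) = (t ⋆ y) ⋆ (z ⋆ x))
    (hcancel : ∀ x y, x ⋆ (x ⋆ y) = y) (x y w : M) :
    (x ⋆ y) ⋆ x = (w ⋆ y) ⋆ w :=
  calc (x ⋆ y) ⋆ x = (x ⋆ y) ⋆ ((x ⋆ y) ⋆ ((w ⋆ y) ⋆ w)) := by
        rw [op_op_cancel_right f hM2 hcancel]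
    _ = (w ⋆ y) ⋆ w := hcancel _ _

theorem op_op_self_of_op (hM2 : ∀ x y z t, (x ⋆ y) ⋆ (z ⋆ t) = (t ⋆ y) ⋆ (z ⋆ x))
    (hcancel : ∀ x y, x ⋆ (x ⋆ y) = y) (x y w : M) :
    (w ⋆ (x ⋆ y)) ⋆ w = y ⋆ x := by
  have h := op_op_cancel_right f hM2 hcancel y (x ⋆ y) x
  rw [hcancel] at h
  calc (w ⋆ (x ⋆ y)) ⋆ w = (y ⋆ (x ⋆ y)) ⋆ y := op_op_self_eq f hM2 hcancel _ _ _
    _ = (y ⋆ (x ⋆ y)) ⋆ ((y ⋆ (x ⋆ y)) ⋆ (y ⋆ x)) := by rw [h]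
    _ = y ⋆ x := hcancel _ _

theorem op_op_swap (hM2 : ∀ x y z t, (x ⋆ y) ⋆ (z ⋆ t) = (t ⋆ y) ⋆ (z ⋆ x))
    (hcancel : ∀ x y, x ⋆ (x ⋆ y) = y) (t u v z : M) :
    (t ⋆ (u ⋆ v)) ⋆ (z ⋆ u) = v ⋆ (z ⋆ t) := by
  rw [← hM2, hcancel]

theorem op_op_op_left_comm (hM2 : ∀ x y z t, (x ⋆ y) ⋆ (z ⋆ t) = (t ⋆ y) ⋆ (z ⋆ x))
    (hcancel : ∀ x y, x ⋆ (x ⋆ y) = y) (x y z t : M) :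
    x ⋆ ((y ⋆ z) ⋆ t) = z ⋆ ((y ⋆ x) ⋆ t) :=
  calc x ⋆ ((y ⋆ z) ⋆ t)
      = ((x ⋆ ((y ⋆ z) ⋆ t)) ⋆ x) ⋆ ((y ⋆ x) ⋆ y) := (op_op_cancel_right f hM2 hcancel _ _ _).symm
    _ = (t ⋆ (y ⋆ z)) ⋆ ((y ⋆ x) ⋆ y) := by rw [op_op_self_of_op f hM2 hcancel]
    _ = z ⋆ ((y ⋆ x) ⋆ t) := op_op_swap f hM2 hcancel t y z (y ⋆ x)

theorem op_op_op_comm (hM2 : ∀ x y z t, (x ⋆ y) ⋆ (z ⋆ t) = (t ⋆ y) ⋆ (z ⋆ x))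
    (hcancel : ∀ x y, x ⋆ (x ⋆ y) = y) (x y z t : M) :
    x ⋆ (y ⋆ (z ⋆ t)) = z ⋆ (y ⋆ (x ⋆ t)) := by
  set d := x ⋆ t
  have hc : (z ⋆ (x ⋆ d)) ⋆ (d ⋆ x) = z := by
    rw [← op_op_self_of_op f hM2 hcancel x d z]
    exact op_op_cancel_right f hM2 hcancel z (x ⋆ d) z
  calc x ⋆ (y ⋆ (z ⋆ t))
      = x ⋆ (y ⋆ (z ⋆ (x ⋆ d))) := by rw [hcancel]
    _ = ((z ⋆ (x ⋆ d)) ⋆ (d ⋆ x)) ⋆ (y ⋆ d) := (op_op_swap f hM2 hcancel _ _ _ _).symm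
    _ = z ⋆ (y ⋆ d) := by rw [hc]

end Groupoid

theorem stmt_4 {M : Type*} (f : M → M → M)
    (hM2 : ∀ x y z t, f (f x y) (f z t) = f (f t y) (f z x))
    (hcancel : ∀ x y, f x (f x y) = y) :
    (∀ x y z t, f x (f (f y z) t) = f z (f (f y x) t)) ∧
    (∀ x y z t, f x (f y (f z t)) = f z (f y (f x t))) :=
  ⟨op_op_op_left_comm f hM2 hcancel, op_op_op_comm f hM2 hcancel⟩
end

section
/- In any groupoid satisfying (M1) (xy)(zt)=(xz)(yt), (M2) (xy)(zt)=(ty)(zx), and (xy²)y² = x, the dual identity y²(y²x) = x also holds. -/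
-- Both sides equal `(x * y) * (z * y)`: the left one by (M2), the right one by (M1).
theorem square_mul_eq_swap_mul_square {M : Type*} (f : M → M → M)
    (hM1 : ∀ x y z t, f (f x y) (f z t) = f (f x z) (f y t))
    (hM2 : ∀ x y z t, f (f x y) (f z t) = f (f t y) (f z x)) (x y z : M) :
    f (f y y) (f z x) = f (f x z) (f y y) := by
  rw [← hM2 x y z y, hM1]

theorem stmt_6 {M : Type*} (f : M → M → M)
    (hM1 : ∀ x y z t, f (f x y) (f z t) = f (f x z) (f y t))
    (hM2 : ∀ x y z t, f (f x y) (f z t) = f (f t y) (f z x))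
    (hsq : ∀ x y, f (f x (f y y)) (f y y) = x) :
    ∀ x y, f (f y y) (f (f y y) x) = x := by
  intro x y
  rw [square_mul_eq_swap_mul_square f hM1 hM2 x y (f y y), hsq]
end

section
/- Every full binary tree T with leaves colored in the Klein 4-group {1,α,β,γ} by the rule that the root has color 1, a left child has α times its parent's color, and a right child has β times its parent's color, satisfies: the number of internal α-vertices plus leaf α-vertices equals φ₁(T), similarly β-vertices equal φ₁(T), γ-vertices equal φ₂(T), and 1-vertices equal φ₂(T)+1, where if a, b, c, d count the α-, β-, γ-, 1-colored leaves, m = a+b, n = c+d, then φ₁(T) = (2m+n-1)/3 and φ₂(T) = (m+2n-2)/3. -/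
/-- Full binary trees: every non-leaf has exactly two children. -/
inductive FBT : Type
  | leaf : FBT
  | node : FBT → FBT → FBT

/-- The Klein 4-group, realized as `ZMod 2 × ZMod 2` (written additively);
`(1,0)` plays the role of α, `(0,1)` of β, `(1,1)` of γ, `(0,0)` of the identity. -/
abbrev K4 := ZMod 2 × ZMod 2

def αc : K4 := (1, 0)
def βc : K4 := (0, 1)

/-- Number of leaves of color `c` in a tree whose root has color `cur`. -/
def leafCnt : FBT → K4 → K4 → ℕ
  | .leaf, cur, c => if cur = c then 1 else 0
  | .node l r, cur, c => leafCnt l (αc + cur) c + leafCnt r (βc + cur) c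

/-- Number of vertices (internal or leaves) of color `c` in a tree whose root has color `cur`. -/
def vertexCnt : FBT → K4 → K4 → ℕ
  | .leaf, cur, c => if cur = c then 1 else 0
  | .node l r, cur, c =>
      (if cur = c then 1 else 0) + vertexCnt l (αc + cur) c + vertexCnt r (βc + cur) c


/-! The colouring is equivariant under translation in `V`: the subtree hanging at a vertex of
colour `g` is coloured like a tree rooted at `1`, with every colour multiplied by `g`. So the
counts of `node l r` are counts of `l` and `r` with colours shifted by `α` and `β`. In particular
the root joins the `γ`- and `1`-leaves of its subtrees into its `α`- and `β`-leaves and vice versa,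
which swaps `m` and `n`, and the four identities follow together by induction on the tree. -/

lemma K4.add_eq_iff_eq_add (g a b : K4) : g + a = b ↔ a = g + b := by
  revert g a b; decide

namespace FBT

lemma leafCnt_add_root (T : FBT) (g cur c : K4) :
    leafCnt T (g + cur) c = leafCnt T cur (g + c) := by
  induction T generalizing cur c with
  | leaf => simp only [leafCnt, K4.add_eq_iff_eq_add]
  | node l r ihl ihr =>
    simp only [leafCnt, add_left_comm αc g, add_left_comm βc g, ihl, ihr]

lemma vertexCnt_add_root (T : FBT) (g cur c : K4) :
    vertexCnt T (g + cur) c = vertexCnt T cur (g + c) := by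
  induction T generalizing cur c with
  | leaf => simp only [vertexCnt, K4.add_eq_iff_eq_add]
  | node l r ihl ihr =>
    simp only [vertexCnt, K4.add_eq_iff_eq_add, add_left_comm αc g, add_left_comm βc g, ihl, ihr]

lemma leafCnt_node_zero (l r : FBT) (c : K4) :
    leafCnt (node l r) 0 c = leafCnt l 0 (αc + c) + leafCnt r 0 (βc + c) := by
  simp only [leafCnt, ← leafCnt_add_root]

lemma vertexCnt_node_zero (l r : FBT) (c : K4) :
    vertexCnt (node l r) 0 c =
      (if 0 = c then 1 else 0) + vertexCnt l 0 (αc + c) + vertexCnt r 0 (βc + c) := by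
  simp only [vertexCnt, ← vertexCnt_add_root]

end FBT

lemma αc_add_self : αc + αc = 0 := by decide
lemma βc_add_self : βc + βc = 0 := by decide
lemma βc_add_αc : βc + αc = αc + βc := by decide
lemma αc_add_αc_add_βc : αc + (αc + βc) = βc := by decide
lemma βc_add_αc_add_βc : βc + (αc + βc) = αc := by decide

theorem stmt_10 (T : FBT) :
    (3 : ℤ) * vertexCnt T 0 αc =
        2 * ((leafCnt T 0 αc : ℤ) + leafCnt T 0 βc) + ((leafCnt T 0 (αc + βc) : ℤ) + leafCnt T 0 0) - 1 ∧
    (3 : ℤ) * vertexCnt T 0 βc =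
        2 * ((leafCnt T 0 αc : ℤ) + leafCnt T 0 βc) + ((leafCnt T 0 (αc + βc) : ℤ) + leafCnt T 0 0) - 1 ∧
    (3 : ℤ) * vertexCnt T 0 (αc + βc) =
        ((leafCnt T 0 αc : ℤ) + leafCnt T 0 βc) + 2 * ((leafCnt T 0 (αc + βc) : ℤ) + leafCnt T 0 0) - 2 ∧
    (3 : ℤ) * vertexCnt T 0 0 =
        ((leafCnt T 0 αc : ℤ) + leafCnt T 0 βc) + 2 * ((leafCnt T 0 (αc + βc) : ℤ) + leafCnt T 0 0) - 2 + 3 := by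
  induction T with
  | leaf => decide
  | node l r ihl ihr =>
    simp +decide only [FBT.leafCnt_node_zero, FBT.vertexCnt_node_zero, add_zero, αc_add_self,
      βc_add_self, βc_add_αc, αc_add_αc_add_βc, βc_add_αc_add_βc] at ihl ihr ⊢
    push_cast
    omega
end

section
/- A 4-tuple (a,b,c,d) of nonnegative integers different from (0,0,0,1) is the leaf-color count (α-leaves, β-leaves, γ-leaves, 1-leaves) of some full binary tree if and only if 2a+2b+c+d ≡ 1 (mod 3), a ≤ (2(a+b)+(c+d)-1)/3, b ≤ (2(a+b)+(c+d)-1)/3, c ≤ ((a+b)+2(c+d)-2)/3, and d ≤ ((a+b)+2(c+d)-2)/3. -/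
/-!
Colour counts of `node l r` are `(d + c', c + d', b + a', a + b')` in terms of the counts
`(a, b, c, d)` of `l` and `(a', b', c', d')` of `r`; this map preserves the linear conditions,
which hold for every tree except the single leaf `(0, 0, 0, 1)`.
Conversely, splitting a leaf of colour `x` into a cherry trades it for one leaf of colour `α x`
and one of colour `β x`. Every admissible tuple other than `(1, 1, 0, 0)` arises by such a split
(of a `1`- or `γ`-leaf, or of an `α`- or `β`-leaf) from an admissible tuple with one leaf fewer,
so induction on the number of leaves builds the tree.
-/

theorem leafCnt_eq_leafCnt_zero (T : FBT) (cur y : K4) :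
    leafCnt T cur y = leafCnt T 0 (y + cur) := by
  induction T generalizing cur y with
  | leaf => revert cur y; decide
  | node l r ihl ihr =>
    simp only [leafCnt, ihl (αc + cur), ihr (βc + cur), ihl (αc + 0), ihr (βc + 0)]
    congr 2 <;> abel

theorem leafCnt_node_zero (l r : FBT) (y : K4) :
    leafCnt (.node l r) 0 y = leafCnt l 0 (y + αc) + leafCnt r 0 (y + βc) := by
  rw [leafCnt, leafCnt_eq_leafCnt_zero l, leafCnt_eq_leafCnt_zero r, add_zero, add_zero]

theorem exists_split_leaf (T : FBT) (x cur : K4) (hx : 1 ≤ leafCnt T cur x) :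
    ∃ T' : FBT, ∀ y : K4, leafCnt T' cur y + (if y = x then 1 else 0)
      = leafCnt T cur y + (if y = αc + x then 1 else 0) + (if y = βc + x then 1 else 0) := by
  induction T generalizing cur with
  | leaf =>
    obtain rfl : cur = x := by
      by_contra hne
      simp [leafCnt, hne] at hx
    exact ⟨.node .leaf .leaf, by revert cur; decide⟩
  | node l r ihl ihr =>
    rcases (by simp only [leafCnt] at hx; omega :
        1 ≤ leafCnt l (αc + cur) x ∨ 1 ≤ leafCnt r (βc + cur) x) with h | h
    · obtain ⟨l', hl'⟩ := ihl (αc + cur) h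
      exact ⟨.node l' r, fun y => by simp only [leafCnt]; have := hl' y; omega⟩
    · obtain ⟨r', hr'⟩ := ihr (βc + cur) h
      exact ⟨.node l r', fun y => by simp only [leafCnt]; have := hr' y; omega⟩

def Realizable (a b c d : ℕ) : Prop :=
  ∃ T : FBT, leafCnt T 0 αc = a ∧ leafCnt T 0 βc = b ∧
    leafCnt T 0 (αc + βc) = c ∧ leafCnt T 0 0 = d

def Admissible (a b c d : ℕ) : Prop :=
  (2 * (a : ℤ) + 2 * b + c + d) % 3 = 1 ∧
    3 * (a : ℤ) ≤ 2 * ((a : ℤ) + b) + ((c : ℤ) + d) - 1 ∧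
    3 * (b : ℤ) ≤ 2 * ((a : ℤ) + b) + ((c : ℤ) + d) - 1 ∧
    3 * (c : ℤ) ≤ ((a : ℤ) + b) + 2 * ((c : ℤ) + d) - 2 ∧
    3 * (d : ℤ) ≤ ((a : ℤ) + b) + 2 * ((c : ℤ) + d) - 2

section

variable {a b c d : ℕ}

theorem realizable_leaf : Realizable 0 0 0 1 := ⟨.leaf, rfl, rfl, rfl, rfl⟩

theorem admissible_node {a' b' c' d' : ℕ}
    (h : (a, b, c, d) = (0, 0, 0, 1) ∨ Admissible a b c d)
    (h' : (a', b', c', d') = (0, 0, 0, 1) ∨ Admissible a' b' c' d') :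
    Admissible (d + c') (c + d') (b + a') (a + b') := by
  simp only [Prod.mk.injEq, Admissible] at *
  push_cast
  omega

theorem Realizable.eq_leaf_or_admissible (h : Realizable a b c d) :
    (a, b, c, d) = (0, 0, 0, 1) ∨ Admissible a b c d := by
  obtain ⟨T, rfl, rfl, rfl, rfl⟩ := h
  induction T with
  | leaf => exact Or.inl rfl
  | node l r ihl ihr =>
    simp only [leafCnt_node_zero]
    exact Or.inr (admissible_node ihl ihr)

theorem Realizable.split_one (h : Realizable a b c (d + 1)) : Realizable (a + 1) (b + 1) c d := by
  obtain ⟨T, rfl, rfl, rfl, hd⟩ := h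
  obtain ⟨T', hT'⟩ := exists_split_leaf T 0 0 (by omega)
  have h1 := hT' αc; have h2 := hT' βc; have h3 := hT' (αc + βc); have h4 := hT' 0
  simp +decide only [ite_true, ite_false, add_zero] at h1 h2 h3 h4
  exact ⟨T', by omega, by omega, by omega, by omega⟩

theorem Realizable.split_gamma (h : Realizable a b (c + 1) d) : Realizable (a + 1) (b + 1) c d := by
  obtain ⟨T, rfl, rfl, hc, rfl⟩ := h
  obtain ⟨T', hT'⟩ := exists_split_leaf T (αc + βc) 0 (by omega)
  have h1 := hT' αc; have h2 := hT' βc; have h3 := hT' (αc + βc); have h4 := hT' 0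
  simp +decide only [ite_true, ite_false, add_zero] at h1 h2 h3 h4
  exact ⟨T', by omega, by omega, by omega, by omega⟩

theorem Realizable.split_alpha (h : Realizable (a + 1) b c d) : Realizable a b (c + 1) (d + 1) := by
  obtain ⟨T, ha, rfl, rfl, rfl⟩ := h
  obtain ⟨T', hT'⟩ := exists_split_leaf T αc 0 (by omega)
  have h1 := hT' αc; have h2 := hT' βc; have h3 := hT' (αc + βc); have h4 := hT' 0
  simp +decide only [ite_true, ite_false, add_zero] at h1 h2 h3 h4
  exact ⟨T', by omega, by omega, by omega, by omega⟩

theorem Realizable.split_beta (h : Realizable a (b + 1) c d) : Realizable a b (c + 1) (d + 1) := by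
  obtain ⟨T, rfl, hb, rfl, rfl⟩ := h
  obtain ⟨T', hT'⟩ := exists_split_leaf T βc 0 (by omega)
  have h1 := hT' αc; have h2 := hT' βc; have h3 := hT' (αc + βc); have h4 := hT' 0
  simp +decide only [ite_true, ite_false, add_zero] at h1 h2 h3 h4
  exact ⟨T', by omega, by omega, by omega, by omega⟩

theorem Admissible.exists_pred (h : Admissible a b c d)
    (hne : (a, b, c, d) ≠ (1, 1, 0, 0)) :
    (∃ a' b', a = a' + 1 ∧ b = b' + 1 ∧
      (Admissible a' b' c (d + 1) ∨ Admissible a' b' (c + 1) d)) ∨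
    (∃ c' d', c = c' + 1 ∧ d = d' + 1 ∧
      (Admissible (a + 1) b c' d' ∨ Admissible a (b + 1) c' d')) := by
  simp only [ne_eq, Prod.mk.injEq, Admissible] at *
  by_cases hab : 1 ≤ a ∧ 1 ≤ b
  · refine Or.inl ⟨a - 1, b - 1, by omega, by omega, ?_⟩
    push_cast [hab.1, hab.2]
    omega
  · refine Or.inr ⟨c - 1, d - 1, by omega, by omega, ?_⟩
    have hcd : 1 ≤ c ∧ 1 ≤ d := by omega
    push_cast [hcd.1, hcd.2]
    omega

end

theorem Admissible.realizable {a b c d : ℕ} (h : Admissible a b c d) : Realizable a b c d := by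
  by_cases h11 : (a, b, c, d) = (1, 1, 0, 0)
  · simp only [Prod.mk.injEq] at h11
    obtain ⟨rfl, rfl, rfl, rfl⟩ := h11
    exact realizable_leaf.split_one
  rcases h.exists_pred h11 with ⟨a, b, rfl, rfl, hd | hc⟩ | ⟨c, d, rfl, rfl, ha | hb⟩
  · exact hd.realizable.split_one
  · exact hc.realizable.split_gamma
  · exact ha.realizable.split_alpha
  · exact hb.realizable.split_beta
termination_by a + b + c + d

theorem stmt_12 (a b c d : ℕ) (h : (a, b, c, d) ≠ (0, 0, 0, 1)) :
    (∃ T : FBT, leafCnt T 0 αc = a ∧ leafCnt T 0 βc = b ∧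
        leafCnt T 0 (αc + βc) = c ∧ leafCnt T 0 0 = d) ↔
      ((2 * (a : ℤ) + 2 * b + c + d) % 3 = 1 ∧
        3 * (a : ℤ) ≤ 2 * ((a : ℤ) + b) + ((c : ℤ) + d) - 1 ∧
        3 * (b : ℤ) ≤ 2 * ((a : ℤ) + b) + ((c : ℤ) + d) - 1 ∧
        3 * (c : ℤ) ≤ ((a : ℤ) + b) + 2 * ((c : ℤ) + d) - 2 ∧
        3 * (d : ℤ) ≤ ((a : ℤ) + b) + 2 * ((c : ℤ) + d) - 2) :=
  ⟨fun hT => (Realizable.eq_leaf_or_admissible hT).resolve_left h, Admissible.realizable⟩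
end

section
/- In any groupoid satisfying all six mutation laws (M1)–(M6) together with the identity ε: x(x(yz)) = (x(zy))x, the identity ((xy)z)(xy) = ((yx)z)(yx) holds. -/
theorem stmt_18_general {M : Type*} (f : M → M → M)
    (hM1 : ∀ x y z t, f (f x y) (f z t) = f (f x z) (f y t))
    (hM2 : ∀ x y z t, f (f x y) (f z t) = f (f t y) (f z x))
    (hM3 : ∀ x y z t, f (f (f x y) z) t = f (f (f x t) z) y)
    (hM6 : ∀ x y z t, f x (f y (f z t)) = f z (f y (f x t)))
    (hε : ∀ x y z, f x (f x (f y z)) = f (f x (f z y)) x) :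
    ∀ x y z, f (f (f x y) z) (f x y) = f (f (f y x) z) (f y x) := by
  intro x y z
  calc f (f (f x y) z) (f x y)
      = f (f (f x y) x) (f z y) := hM1 (f x y) z x y
    _ = f (f (f x (f z y)) x) y := hM3 x y x (f z y)
    _ = f (f x (f x (f y z))) y := by rw [hε x y z]
    _ = f (f y (f x (f x z))) y := by rw [hM6 x x y z]
    _ = f y (f y (f (f x z) x)) := (hε y (f x z) x).symm
    _ = f (f x z) (f y (f y x)) := (hM6 (f x z) y y x).symm
    _ = f (f (f y x) z) (f y x) := (hM2 (f y x) z y x).symm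

theorem stmt_18 {M : Type*} (f : M → M → M)
    (hM1 : ∀ x y z t, f (f x y) (f z t) = f (f x z) (f y t))
    (hM2 : ∀ x y z t, f (f x y) (f z t) = f (f t y) (f z x))
    (hM3 : ∀ x y z t, f (f (f x y) z) t = f (f (f x t) z) y)
    (hM4 : ∀ x y z t, f (f x (f y z)) t = f (f x (f t z)) y)
    (hM5 : ∀ x y z t, f x (f (f y z) t) = f z (f (f y x) t))
    (hM6 : ∀ x y z t, f x (f y (f z t)) = f z (f y (f x t)))
    (hε : ∀ x y z, f x (f x (f y z)) = f (f x (f z y)) x) :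
    ∀ x y z, f (f (f x y) z) (f x y) = f (f (f y x) z) (f y x) :=
  stmt_18_general f hM1 hM2 hM3 hM6 hε
end

section
/- In any groupoid satisfying all six mutation laws (M1)–(M6) together with ε: x(x(yz)) = (x(zy))x, the identity (z(yx))(xy) = (z(xy))(yx) holds. -/
theorem stmt_19_general {M : Type*} (f : M → M → M)
    (hM1 : ∀ x y z t, f (f x y) (f z t) = f (f x z) (f y t))
    (hM2 : ∀ x y z t, f (f x y) (f z t) = f (f t y) (f z x))
    (hM4 : ∀ x y z t, f (f x (f y z)) t = f (f x (f t z)) y)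
    (hM5 : ∀ x y z t, f x (f (f y z) t) = f z (f (f y x) t))
    (hM6 : ∀ x y z t, f x (f y (f z t)) = f z (f y (f x t)))
    (hε : ∀ x y z, f x (f x (f y z)) = f (f x (f z y)) x) :
    ∀ x y z, f (f z (f y x)) (f x y) = f (f z (f x y)) (f y x) := by
  intro x y z
  calc f (f z (f y x)) (f x y)
      = f (f z x) (f (f y x) y) := hM1 z (f y x) x y
    _ = f x (f (f y (f z x)) y) := hM5 (f z x) y x y
    _ = f x (f y (f y (f x z))) := congrArg (f x) (hε y x z).symm
    _ = f x (f x (f y (f y z))) := congrArg (f x) (hM6 y y x z)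
    _ = f (f x (f (f y z) y)) x := hε x y (f y z)
    _ = f (f x (f x y)) (f y z) := hM4 x (f y z) y x
    _ = f (f z (f x y)) (f y x) := hM2 x (f x y) y z

theorem stmt_19 {M : Type*} (f : M → M → M)
    (hM1 : ∀ x y z t, f (f x y) (f z t) = f (f x z) (f y t))
    (hM2 : ∀ x y z t, f (f x y) (f z t) = f (f t y) (f z x))
    (hM3 : ∀ x y z t, f (f (f x y) z) t = f (f (f x t) z) y)
    (hM4 : ∀ x y z t, f (f x (f y z)) t = f (f x (f t z)) y)
    (hM5 : ∀ x y z t, f x (f (f y z) t) = f z (f (f y x) t))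
    (hM6 : ∀ x y z t, f x (f y (f z t)) = f z (f y (f x t)))
    (hε : ∀ x y z, f x (f x (f y z)) = f (f x (f z y)) x) :
    ∀ x y z, f (f z (f y x)) (f x y) = f (f z (f x y)) (f y x) :=
  stmt_19_general f hM1 hM2 hM4 hM5 hM6 hε
end
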